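/- arXiv:1401.5688 — 4 statements merged into one kernel-verified Lean document; each statement's English description precedes it below -/
import Mathlib

section
/- Let P_i and P_g be probability mass functions on a finite set S such that P_g(s) > 0 implies P_i(s) > 0, and suppose the likelihood ratios P_g(s)/P_i(s) (on the support of P_g) are bounded. Define M(t) = Σ_{P_i(s)>0} P_i(s)^{1-t} P_g(s)^t. Then as γ → 0⁺, M(1-√γ) = 1 - √γ · D + O(γ), where D = Σ_{P_g(s)>0} P_g(s) ln(P_g(s)/P_i(s)) is the Kullback–Leibler divergence (in nats) of P_g from P_i. -/
open Finset Real Asymptotics Filter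

/-!
Writing `r s = log (Pg s / Pi s)`, on the support of `Pg` each summand of `M (1 - x)` equals
`Pg s * exp (-(x * r s))`, and the summands off that support vanish as long as `x ≠ 1`. Since `Pg`
has total mass `1`, `M (1 - x) - (1 - x * D)` is the `Pg`-average of the second-order Taylor
remainders `exp (-(x * r s)) - (1 - x * r s) = O(x ^ 2)`, and `x = √γ` turns `O(x ^ 2)` into `O(γ)`.
-/

lemma rpow_mul_rpow_one_sub_eq_mul_exp {p q : ℝ} (hp : 0 < p) (hq : 0 < q) (x : ℝ) :
    p ^ x * q ^ (1 - x) = q * exp (-(x * log (q / p))) := by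
  rw [rpow_def_of_pos hp, rpow_def_of_pos hq, log_div hq.ne' hp.ne', ← exp_log hq, log_exp,
    ← exp_add, ← exp_add]
  ring_nf

lemma sum_rpow_mul_rpow_one_sub_eq {S : Type*} [Fintype S] {Pi Pg : S → ℝ}
    (hPg0 : ∀ s, 0 ≤ Pg s) (hac : ∀ s, 0 < Pg s → 0 < Pi s) {x : ℝ} (hx : x ≠ 1) :
    ∑ s ∈ univ.filter (fun s => 0 < Pi s), Pi s ^ x * Pg s ^ (1 - x)
      = ∑ s ∈ univ.filter (fun s => 0 < Pg s), Pg s * exp (-(x * log (Pg s / Pi s))) := by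
  have hsupp : univ.filter (fun s => 0 < Pg s) ⊆ univ.filter (fun s => 0 < Pi s) :=
    monotone_filter_right _ fun s _ => hac s
  rw [← sum_subset hsupp]
  · refine sum_congr rfl fun s hs => ?_
    have hPg : 0 < Pg s := (mem_filter.1 hs).2
    exact rpow_mul_rpow_one_sub_eq_mul_exp (hac s hPg) hPg x
  · intro s _ hs
    have hPg : Pg s = 0 := le_antisymm (by simpa using hs) (hPg0 s)
    rw [hPg, zero_rpow (sub_ne_zero.2 hx.symm), mul_zero]

lemma exp_neg_sqrt_mul_sub_isBigO (r : ℝ) :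
    (fun γ : ℝ => exp (-(√γ * r)) - (1 - √γ * r)) =O[nhdsWithin 0 (Set.Ioi 0)] (fun γ => γ) := by
  have hlim : Tendsto (fun γ : ℝ => -(√γ * r)) (nhdsWithin 0 (Set.Ioi 0)) (nhds 0) := by
    have : Continuous (fun γ : ℝ => -(√γ * r)) := by fun_prop
    simpa using (this.tendsto 0).mono_left nhdsWithin_le_nhds
  have htaylor := (Real.exp_sub_sum_range_isBigO_pow 2).comp_tendsto hlim
  have hsq : (fun γ : ℝ => (-(√γ * r)) ^ 2) =ᶠ[nhdsWithin 0 (Set.Ioi 0)] fun γ => r ^ 2 * γ := by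
    filter_upwards [self_mem_nhdsWithin] with γ hγ
    rw [neg_sq, mul_pow, sq_sqrt (le_of_lt hγ), mul_comm]
  refine (htaylor.congr' ?_ hsq).trans ((isBigO_refl _ _).const_mul_left _)
  refine Eventually.of_forall fun γ => ?_
  simp [sum_range_succ, sub_eq_add_neg]

theorem stmt6_general {S : Type*} [Fintype S] (Pi Pg : S → ℝ)
    (hPg0 : ∀ s, 0 ≤ Pg s)
    (hPg1 : ∑ s, Pg s = 1)
    (hac : ∀ s, 0 < Pg s → 0 < Pi s)
    (M : ℝ → ℝ)
    (hM : ∀ t, M t = ∑ s ∈ Finset.univ.filter (fun s => 0 < Pi s),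
        (Pi s) ^ (1 - t) * (Pg s) ^ t)
    (D : ℝ)
    (hD : D = ∑ s ∈ Finset.univ.filter (fun s => 0 < Pg s),
        Pg s * Real.log (Pg s / Pi s)) :
    (fun γ : ℝ => M (1 - Real.sqrt γ) - (1 - Real.sqrt γ * D))
      =O[nhdsWithin 0 (Set.Ioi 0)] (fun γ : ℝ => γ) := by
  set r : S → ℝ := fun s => log (Pg s / Pi s)
  have hmass : ∑ s ∈ univ.filter (fun s => 0 < Pg s), Pg s = 1 := by
    rw [sum_filter_of_ne fun s _ h => lt_of_le_of_ne (hPg0 s) (Ne.symm h), hPg1]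
  have hremainder : ∀ x ≠ 1, M (1 - x) - (1 - x * D)
      = ∑ s ∈ univ.filter (fun s => 0 < Pg s), Pg s * (exp (-(x * r s)) - (1 - x * r s)) := by
    intro x hx
    have hsplit : ∑ s ∈ univ.filter (fun s => 0 < Pg s), Pg s * (exp (-(x * r s)) - (1 - x * r s))
        = ∑ s ∈ univ.filter (fun s => 0 < Pg s), Pg s * exp (-(x * r s))
          - (∑ s ∈ univ.filter (fun s => 0 < Pg s), Pg s
            - x * ∑ s ∈ univ.filter (fun s => 0 < Pg s), Pg s * r s) := by
      rw [mul_sum, ← sum_sub_distrib, ← sum_sub_distrib]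
      exact sum_congr rfl fun s _ => by ring
    rw [hsplit, hmass, hM, sub_sub_cancel, sum_rpow_mul_rpow_one_sub_eq hPg0 hac hx, hD]
  have hsum : (fun γ : ℝ => ∑ s ∈ univ.filter (fun s => 0 < Pg s),
      Pg s * (exp (-(√γ * r s)) - (1 - √γ * r s))) =O[nhdsWithin 0 (Set.Ioi 0)] fun γ => γ :=
    IsBigO.fun_sum fun s _ => (exp_neg_sqrt_mul_sub_isBigO (r s)).const_mul_left (Pg s)
  refine hsum.congr' ?_ EventuallyEq.rfl
  filter_upwards [nhdsWithin_le_nhds (eventually_ne_nhds (zero_ne_one' ℝ))] with γ hγ1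
  rw [hremainder _ (by rwa [Ne, sqrt_eq_one])]

/-- First-order expansion of the moment generating function near `t = 1`:
`M(1-√γ) = 1 - √γ·D + O(γ)` as `γ → 0⁺`, where `D` is the KL divergence in nats. -/
theorem stmt6 {S : Type*} [Fintype S] (Pi Pg : S → ℝ)
    (hPi0 : ∀ s, 0 ≤ Pi s) (hPg0 : ∀ s, 0 ≤ Pg s)
    (hPi1 : ∑ s, Pi s = 1) (hPg1 : ∑ s, Pg s = 1)
    (hac : ∀ s, 0 < Pg s → 0 < Pi s)
    (hbdd : ∃ B : ℝ, ∀ s, 0 < Pg s → Pg s / Pi s ≤ B)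
    (M : ℝ → ℝ)
    (hM : ∀ t, M t = ∑ s ∈ Finset.univ.filter (fun s => 0 < Pi s),
        (Pi s) ^ (1 - t) * (Pg s) ^ t)
    (D : ℝ)
    (hD : D = ∑ s ∈ Finset.univ.filter (fun s => 0 < Pg s),
        Pg s * Real.log (Pg s / Pi s)) :
    (fun γ : ℝ => M (1 - Real.sqrt γ) - (1 - Real.sqrt γ * D))
      =O[nhdsWithin 0 (Set.Ioi 0)] (fun γ : ℝ => γ) :=
  stmt6_general Pi Pg hPg0 hPg1 hac M hM D hD
end

section
/- Let h(x) = -x log₂ x - (1-x) log₂(1-x) be the binary entropy function. Then lim_{c→∞} c² · (1 - h(1/2 + 1/(2c))) = 1/(2 ln 2). -/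
open Real Filter

/-- The binary entropy function (base 2), with `h(0) = h(1) = 0`. -/
noncomputable def binEnt (x : ℝ) : ℝ := -(x * Real.logb 2 x) - (1 - x) * Real.logb 2 (1 - x)

/-!
Write `p = 1/2 + 1/(2c)`, so that `p = (1 + 1/c)/2` and `1 - p = (1 - 1/c)/2`. Expanding the
logarithms, `2 log 2 · c² (1 - h(p)) = c(c+1) log(1 + 1/c) + c(c-1) log(1 - 1/c)`, and regrouping
this as `c log(1 + 1/c) - c log(1 - 1/c) + c² log(1 - 1/c²)` removes the second-order
cancellation: each term has the form `x log(1 + t/x)` with `x → ∞`, which tends to `t`. The three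
limits add up to `1 + 1 - 1 = 1`.
-/

lemma sq_mul_one_sub_binEnt_half_add (c : ℝ) (hc : 1 < c) :
    c ^ 2 * (1 - binEnt (1/2 + 1/(2*c))) =
      (c * log (1 + 1/c) - c * log (1 + -1/c) + c ^ 2 * log (1 + -1/c^2)) / (2 * log 2) := by
  have hc0 : c ≠ 0 := by positivity
  have hplus : 1 + 1/c ≠ 0 := by positivity
  have hminus : 1 + -1/c ≠ 0 := by
    have : 1/c < 1 := (div_lt_one (by positivity)).2 hc
    rw [neg_div]
    linarith
  have hsq : 1 + -1/c^2 = (1 + 1/c) * (1 + -1/c) := by field_simp; ring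
  have hp : 1/2 + 1/(2*c) = (1 + 1/c) / 2 := by ring
  have hq : 1 - (1/2 + 1/(2*c)) = (1 + -1/c) / 2 := by ring
  rw [binEnt, hq, hp, logb, logb, log_div hplus two_ne_zero, log_div hminus two_ne_zero, hsq,
    log_mul hplus hminus]
  field_simp
  ring

/-- `lim_{c→∞} c² (1 - h(1/2 + 1/(2c))) = 1/(2 ln 2)`. -/
theorem stmt9 :
    Tendsto (fun c : ℕ => (c : ℝ)^2 * (1 - binEnt (1/2 + 1/(2*(c : ℝ)))))
      atTop (nhds (1 / (2 * Real.log 2))) := by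
  have hc : Tendsto (fun c : ℕ => (c : ℝ)) atTop atTop := tendsto_natCast_atTop_atTop
  have hlim := (((tendsto_mul_log_one_add_div_atTop 1).comp hc).sub
    ((tendsto_mul_log_one_add_div_atTop (-1)).comp hc)).add
    ((tendsto_mul_log_one_add_div_atTop (-1)).comp ((tendsto_pow_atTop two_ne_zero).comp hc))
  refine ((hlim.div_const (2 * log 2)).congr' ?_).trans_eq (by norm_num)
  filter_upwards [eventually_gt_atTop 1] with c hc1
  rw [sq_mul_one_sub_binEnt_half_add c (mod_cast hc1)]
  rfl
end

section
/- Define f: [0,1] → ℝ by f(u) = h((1-u)/2) - (1-u), where h is the binary entropy function (log base 2, with h(0) = h(1) = 0). Then f attains its maximum on [0,1] uniquely at u = 3/5, and f(3/5) = log₂(5/4). -/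
/-!
With `x = (1 - u)/2`, `f(u) = log₂(5/4) - D(x ‖ 1/5) / ln 2`, where `D` is the Kullback–Leibler
divergence between Bernoulli laws. Writing `D(p ‖ q) = q φ(p/q) + (1 - q) φ((1-p)/(1-q))` with
`φ(t) = t ln t + 1 - t ≥ 0`, which vanishes only at `t = 1`, shows that `D(x ‖ 1/5) ≥ 0` with
equality only at `x = 1/5`, i.e. `u = 3/5`.
-/

open Real

open InformationTheory Set

lemma mul_log_div_of_ne_zero (a : ℝ) {b : ℝ} (hb : b ≠ 0) :
    a * log (a / b) = a * log a - a * log b := by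
  rcases eq_or_ne a 0 with rfl | ha
  · simp
  · rw [log_div ha hb]
    ring

/-- The Kullback–Leibler divergence, in nats, of `Bernoulli p` from `Bernoulli q`. -/
noncomputable def binKL (p q : ℝ) : ℝ :=
  p * log (p / q) + (1 - p) * log ((1 - p) / (1 - q))

lemma binKL_eq_klFun (p : ℝ) {q : ℝ} (hq0 : q ≠ 0) (hq1 : q ≠ 1) :
    binKL p q = q * klFun (p / q) + (1 - q) * klFun ((1 - p) / (1 - q)) := by
  have hq1' : 1 - q ≠ 0 := sub_ne_zero.mpr hq1.symm
  simp only [binKL, klFun]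
  field_simp
  ring

lemma binKL_nonneg {p q : ℝ} (hp : p ∈ Icc 0 1) (hq : q ∈ Ioo 0 1) : 0 ≤ binKL p q := by
  obtain ⟨hp0, hp1⟩ := hp
  obtain ⟨hq0, hq1⟩ := hq
  rw [binKL_eq_klFun p hq0.ne' hq1.ne]
  have h1 : 0 ≤ klFun (p / q) := klFun_nonneg (by positivity)
  have h2 : 0 ≤ klFun ((1 - p) / (1 - q)) := klFun_nonneg (div_nonneg (by linarith) (by linarith))
  have h3 : 0 ≤ 1 - q := by linarith
  positivity

lemma binKL_eq_zero_iff {p q : ℝ} (hp : p ∈ Icc 0 1) (hq : q ∈ Ioo 0 1) :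
    binKL p q = 0 ↔ p = q := by
  obtain ⟨hp0, hp1⟩ := hp
  obtain ⟨hq0, hq1⟩ := hq
  refine ⟨fun h => ?_, fun h => by simp [h, binKL]⟩
  rw [binKL_eq_klFun p hq0.ne' hq1.ne] at h
  have h1 : 0 ≤ q * klFun (p / q) := mul_nonneg hq0.le (klFun_nonneg (by positivity))
  have h2 : 0 ≤ (1 - q) * klFun ((1 - p) / (1 - q)) :=
    mul_nonneg (by linarith) (klFun_nonneg (div_nonneg (by linarith) (by linarith)))
  have hkl : klFun (p / q) = 0 :=
    (mul_eq_zero.mp ((add_eq_zero_iff_of_nonneg h1 h2).mp h).1).resolve_left hq0.ne'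
  rwa [klFun_eq_zero_iff (by positivity), div_eq_one_iff_eq hq0.ne'] at hkl

lemma binEnt_sub_two_mul_eq_logb_sub_binKL (x : ℝ) :
    binEnt x - 2 * x = logb 2 (5 / 4) - binKL x (1 / 5) / log 2 := by
  have hlog2 : log 2 ≠ 0 := (log_pos one_lt_two).ne'
  have h4 : log 4 = 2 * log 2 := by
    rw [show (4 : ℝ) = 2 ^ 2 by norm_num, log_pow]
    norm_num
  have h54 : log (5 / 4) = log 5 - 2 * log 2 := by
    rw [log_div (by norm_num) (by norm_num), h4]
  have h45 : log (1 - 1 / 5) = 2 * log 2 - log 5 := by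
    rw [show (1 : ℝ) - 1 / 5 = 4 / 5 by norm_num, log_div (by norm_num) (by norm_num), h4]
  have h15 : log (1 / 5) = -log 5 := by
    rw [one_div, log_inv]
  simp only [binEnt, binKL, logb, mul_log_div_of_ne_zero x (by norm_num : (1 / 5 : ℝ) ≠ 0),
    mul_log_div_of_ne_zero (1 - x) (by norm_num : (1 - 1 / 5 : ℝ) ≠ 0), h54, h45, h15]
  field_simp
  ring

/-- `f(u) = h((1-u)/2) - (1-u)` attains its maximum on `[0,1]` uniquely at
`u = 3/5`, with maximum value `log₂(5/4)`. -/
theorem stmt15 :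
    IsMaxOn (fun u : ℝ => binEnt ((1 - u)/2) - (1 - u)) (Set.Icc (0:ℝ) 1) (3/5) ∧
    (∀ u ∈ Set.Icc (0:ℝ) 1,
        binEnt ((1 - u)/2) - (1 - u) = binEnt ((1 - 3/5)/2) - (1 - 3/5) → u = 3/5) ∧
    binEnt ((1 - 3/5)/2) - (1 - 3/5) = Real.logb 2 (5/4) := by
  have hlog2 : 0 < log 2 := log_pos one_lt_two
  have hq : (1 / 5 : ℝ) ∈ Ioo 0 1 := by norm_num
  have hx : ∀ u ∈ Icc (0 : ℝ) 1, (1 - u) / 2 ∈ Icc (0 : ℝ) 1 := fun u ⟨hu0, hu1⟩ =>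
    ⟨by linarith, by linarith⟩
  have key : ∀ u : ℝ, binEnt ((1 - u) / 2) - (1 - u)
      = logb 2 (5 / 4) - binKL ((1 - u) / 2) (1 / 5) / log 2 := fun u => by
    rw [← binEnt_sub_two_mul_eq_logb_sub_binKL, mul_div_cancel₀ _ two_ne_zero]
  have hval : binEnt ((1 - 3 / 5) / 2) - (1 - 3 / 5) = logb 2 (5 / 4) := by
    rw [key, show ((1 : ℝ) - 3 / 5) / 2 = 1 / 5 by norm_num,
      (binKL_eq_zero_iff (Ioo_subset_Icc_self hq) hq).2 rfl, zero_div, sub_zero]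
  refine ⟨fun u hu => ?_, fun u hu heq => ?_, hval⟩
  · show binEnt ((1 - u) / 2) - (1 - u) ≤ binEnt ((1 - 3 / 5) / 2) - (1 - 3 / 5)
    rw [hval, key]
    have := div_nonneg (binKL_nonneg (hx u hu) hq) hlog2.le
    linarith
  · rw [hval, key, sub_eq_self, div_eq_zero_iff, or_iff_left hlog2.ne',
      binKL_eq_zero_iff (hx u hu) hq] at heq
    linarith
end

section
/- Let B_c ~ Binomial(c, 1/2) and let h be the binary entropy function (log base 2). Then lim_{c→∞} c·(1 - E[h(B_c/c)]) = 1/(2 ln 2). -/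
/-!
Write `t = 2y - 1`. Then `2 log 2 · (1 - h(y)) = (1 + t) log (1 + t) + (1 - t) log (1 - t)`,
and the Taylor bounds of the logarithm squeeze this between `t²` and `t² + (2/3) t⁴` on
`[-1, 1]`. Hence `0 ≤ 1 - h(y) - 2 (y - 1/2)² / log 2 ≤ 8 (y - 1/2)⁴` uniformly on `[0, 1]`.
Averaging over `y = B_c / c` and using the central moments `E (B_c/c - 1/2)² = 1/(4c)` and
`E (B_c/c - 1/2)⁴ = (3c - 2)/(16 c³)` gives `c (1 - E h(B_c/c)) = 1/(2 log 2) + O(1/c)`.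
-/

open Real Filter Finset

lemma log_one_add_le_cubic {t : ℝ} (ht : 0 ≤ t) : log (1 + t) ≤ t - t ^ 2 / 2 + t ^ 3 / 3 := by
  let f x : ℝ := x - x ^ 2 / 2 + x ^ 3 / 3 - log (1 + x)
  have hf : ∀ x ∈ Set.Ici (0 : ℝ), HasDerivAt f (x ^ 3 / (1 + x)) x := by
    intro x (hx : 0 ≤ x)
    have h := (((hasDerivAt_id x).sub ((hasDerivAt_pow 2 x).div_const 2)).add
      ((hasDerivAt_pow 3 x).div_const 3)).sub
      (((hasDerivAt_id x).const_add 1).log (by simp; positivity))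
    refine (h : HasDerivAt f _ x).congr_deriv ?_
    have : 1 + x ≠ 0 := by positivity
    simp only [id]
    field_simp
    ring
  have hmono : MonotoneOn f (Set.Ici 0) :=
    monotoneOn_of_hasDerivWithinAt_nonneg (convex_Ici 0)
      (fun x hx => (hf x hx).continuousAt.continuousWithinAt)
      (fun x hx => (hf x (interior_subset hx)).hasDerivWithinAt)
      (fun x hx => by rw [interior_Ici] at hx; have : (0 : ℝ) < x := hx; positivity)
  simpa [f] using hmono Set.self_mem_Ici ht ht

lemma cubic_le_neg_log_one_sub {t : ℝ} (ht₀ : 0 ≤ t) (ht₁ : t < 1) :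
    t + t ^ 2 / 2 + t ^ 3 / 3 ≤ -log (1 - t) := by
  have h := sum_le_hasSum (range 3) (fun i _ => by positivity)
    (hasSum_pow_div_log_of_abs_lt_one (abs_lt.2 ⟨by linarith, ht₁⟩))
  norm_num [sum_range_succ] at h
  linarith

lemma two_mul_le_log_one_add_sub_log_one_sub {t : ℝ} (ht₀ : 0 ≤ t) (ht₁ : t < 1) :
    2 * t ≤ log (1 + t) - log (1 - t) := by
  have h := le_hasSum (hasSum_log_sub_log_of_abs_lt_one (abs_lt.2 ⟨by linarith, ht₁⟩)) 0
    (fun i _ => by positivity)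
  simpa using h

-- Twice the Kullback–Leibler divergence (in nats) of Bernoulli((1 + t)/2) from Bernoulli(1/2).
noncomputable def entropyDeficit (t : ℝ) : ℝ := (1 + t) * log (1 + t) + (1 - t) * log (1 - t)

lemma entropyDeficit_abs (t : ℝ) : entropyDeficit |t| = entropyDeficit t := by
  rcases abs_choice t with h | h <;> rw [h]
  rw [entropyDeficit, entropyDeficit, sub_neg_eq_add, ← sub_eq_add_neg]
  ring

lemma hasDerivAt_entropyDeficit {t : ℝ} (ht₀ : -1 < t) (ht₁ : t < 1) :
    HasDerivAt entropyDeficit (log (1 + t) - log (1 - t)) t := by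
  have hplus := (hasDerivAt_mul_log (by linarith : 1 + t ≠ 0)).comp t
    ((hasDerivAt_id t).const_add 1)
  have hminus := (hasDerivAt_mul_log (by linarith : 1 - t ≠ 0)).comp t
    ((hasDerivAt_id t).const_sub 1)
  exact (hplus.add hminus : HasDerivAt entropyDeficit _ t).congr_deriv (by ring)

lemma sq_le_entropyDeficit_of_nonneg {t : ℝ} (ht₀ : 0 ≤ t) (ht₁ : t ≤ 1) :
    t ^ 2 ≤ entropyDeficit t := by
  let f x : ℝ := entropyDeficit x - x ^ 2
  have hcont : Continuous entropyDeficit :=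
    (continuous_mul_log.comp (continuous_const.add continuous_id)).add
      (continuous_mul_log.comp (continuous_const.sub continuous_id))
  have hmono : MonotoneOn f (Set.Icc 0 1) := by
    refine monotoneOn_of_hasDerivWithinAt_nonneg (convex_Icc 0 1)
      (hcont.sub (continuous_pow 2)).continuousOn
      (f' := fun x => log (1 + x) - log (1 - x) - 2 * x) (fun x hx => ?_) (fun x hx => ?_)
    all_goals rw [interior_Icc] at hx; obtain ⟨hx₀, hx₁⟩ := hx
    · refine ((hasDerivAt_entropyDeficit (by linarith) hx₁).sub (hasDerivAt_pow 2 x)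
        ).hasDerivWithinAt.congr_deriv ?_
      ring
    · linarith [two_mul_le_log_one_add_sub_log_one_sub hx₀.le hx₁]
  have := hmono ⟨le_rfl, zero_le_one⟩ ⟨ht₀, ht₁⟩ ht₀
  simpa [f, entropyDeficit] using this

lemma entropyDeficit_le_of_nonneg {t : ℝ} (ht₀ : 0 ≤ t) (ht₁ : t ≤ 1) :
    entropyDeficit t ≤ t ^ 2 + 2 / 3 * t ^ 4 := by
  have hplus : (1 + t) * log (1 + t) ≤ (1 + t) * (t - t ^ 2 / 2 + t ^ 3 / 3) := by
    gcongr
    exact log_one_add_le_cubic ht₀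
  have hminus : (1 - t) * log (1 - t) ≤ (1 - t) * -(t + t ^ 2 / 2 + t ^ 3 / 3) := by
    rcases ht₁.lt_or_eq with ht₁ | rfl
    · gcongr
      linarith [cubic_le_neg_log_one_sub ht₀ ht₁]
    · simp
  unfold entropyDeficit
  linarith

lemma entropyDeficit_mem_Icc {t : ℝ} (ht : |t| ≤ 1) :
    entropyDeficit t ∈ Set.Icc (t ^ 2) (t ^ 2 + 2 / 3 * t ^ 4) := by
  rw [← entropyDeficit_abs, ← sq_abs, ← (show Even 4 by decide).pow_abs]
  exact ⟨sq_le_entropyDeficit_of_nonneg (abs_nonneg t) ht,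
    entropyDeficit_le_of_nonneg (abs_nonneg t) ht⟩

lemma two_mul_mul_log_two_mul (x : ℝ) : 2 * x * log (2 * x) = 2 * x * log 2 + 2 * x * log x := by
  rcases eq_or_ne x 0 with rfl | hx
  · simp
  · rw [log_mul two_ne_zero hx]
    ring

lemma one_sub_binEnt (y : ℝ) : 1 - binEnt y = entropyDeficit (2 * y - 1) / (2 * log 2) := by
  have hlog : log 2 ≠ 0 := (log_pos one_lt_two).ne'
  have h₁ := two_mul_mul_log_two_mul y
  have h₂ := two_mul_mul_log_two_mul (1 - y)
  rw [entropyDeficit, show 1 + (2 * y - 1) = 2 * y by ring,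
    show 1 - (2 * y - 1) = 2 * (1 - y) by ring, h₁, h₂, binEnt, logb, logb]
  field_simp
  ring

lemma one_sub_binEnt_sub_mem_Icc {y : ℝ} (hy : y ∈ Set.Icc 0 1) :
    1 - binEnt y - 2 / log 2 * (y - 1 / 2) ^ 2 ∈ Set.Icc 0 (8 * (y - 1 / 2) ^ 4) := by
  have hlog : 0 < log 2 := log_pos one_lt_two
  obtain ⟨hlow, hup⟩ := entropyDeficit_mem_Icc (t := 2 * y - 1)
    (abs_le.2 ⟨by linarith [hy.1], by linarith [hy.2]⟩)
  have e : 1 - binEnt y - 2 / log 2 * (y - 1 / 2) ^ 2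
      = (entropyDeficit (2 * y - 1) - (2 * y - 1) ^ 2) / (2 * log 2) := by
    rw [one_sub_binEnt]
    field_simp
  rw [e]
  constructor
  · exact div_nonneg (by linarith) (by positivity)
  · rw [div_le_iff₀ (by positivity)]
    -- uses `2 / 3 < log 2`
    nlinarith [pow_nonneg (sq_nonneg (y - 1 / 2)) 2, log_two_gt_d9]

section CentralMoments

variable {R : Type*} [CommRing R]

lemma sum_range_succ_choose_mul (g : ℕ → R) (n : ℕ) :
    ∑ i ∈ range (n + 1 + 1), ((n + 1).choose i : R) * g i
      = ∑ i ∈ range (n + 1), (n.choose i : R) * (g i + g (i + 1)) := by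
  simpa [mul_add, sum_add_distrib] using sum_choose_succ_mul (fun i _ => g i) n

lemma sum_range_choose_cast (c : ℕ) : ∑ z ∈ range (c + 1), (c.choose z : R) = 2 ^ c := by
  simpa using congrArg (Nat.cast : ℕ → R) (Nat.sum_range_choose c)

-- By Pascal's rule the sums at `c + 1` are sums of `(u - 1) ^ k + (u + 1) ^ k` at `c`,
-- with `u = 2 z - c`, and these only involve the even powers of `u`.
lemma sum_range_choose_mul_centered_sq (c : ℕ) :
    ∑ z ∈ range (c + 1), (c.choose z : R) * (2 * z - c) ^ 2 = (c : R) * 2 ^ c := by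
  induction c with
  | zero => simp
  | succ c ih =>
    rw [sum_range_succ_choose_mul]
    calc ∑ z ∈ range (c + 1), (c.choose z : R) *
          ((2 * (z : R) - ↑(c + 1)) ^ 2 + (2 * ↑(z + 1) - ↑(c + 1)) ^ 2)
        = 2 * ∑ z ∈ range (c + 1), (c.choose z : R) * (2 * z - c) ^ 2
          + 2 * ∑ z ∈ range (c + 1), (c.choose z : R) := by
          rw [mul_sum, mul_sum, ← sum_add_distrib]
          exact sum_congr rfl fun z _ => by push_cast; ring
      _ = ↑(c + 1) * 2 ^ (c + 1) := by
          rw [ih, sum_range_choose_cast]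
          push_cast
          ring

lemma sum_range_choose_mul_centered_pow_four (c : ℕ) :
    ∑ z ∈ range (c + 1), (c.choose z : R) * (2 * z - c) ^ 4
      = (3 * (c : R) ^ 2 - 2 * c) * 2 ^ c := by
  induction c with
  | zero => simp
  | succ c ih =>
    rw [sum_range_succ_choose_mul]
    calc ∑ z ∈ range (c + 1), (c.choose z : R) *
          ((2 * (z : R) - ↑(c + 1)) ^ 4 + (2 * ↑(z + 1) - ↑(c + 1)) ^ 4)
        = 2 * ∑ z ∈ range (c + 1), (c.choose z : R) * (2 * z - c) ^ 4
          + 12 * ∑ z ∈ range (c + 1), (c.choose z : R) * (2 * z - c) ^ 2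
          + 2 * ∑ z ∈ range (c + 1), (c.choose z : R) := by
          rw [mul_sum, mul_sum, mul_sum, ← sum_add_distrib, ← sum_add_distrib]
          exact sum_congr rfl fun z _ => by push_cast; ring
      _ = (3 * ↑(c + 1) ^ 2 - 2 * ↑(c + 1)) * 2 ^ (c + 1) := by
          rw [ih, sum_range_choose_mul_centered_sq, sum_range_choose_cast]
          push_cast
          ring

end CentralMoments

noncomputable def binomialMean (c : ℕ) (f : ℝ → ℝ) : ℝ :=
  ∑ z ∈ range (c + 1), (c.choose z : ℝ) * (1 / 2) ^ c * f (z / c)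

section BinomialMean

variable (c : ℕ)

lemma binomialMean_const (a : ℝ) : binomialMean c (fun _ => a) = a := by
  rw [binomialMean, ← sum_mul, ← sum_mul, sum_range_choose_cast, ← mul_pow]
  norm_num

lemma binomialMean_sub (f g : ℝ → ℝ) :
    binomialMean c (fun y => f y - g y) = binomialMean c f - binomialMean c g := by
  simp only [binomialMean, mul_sub, sum_sub_distrib]

lemma binomialMean_const_mul (a : ℝ) (f : ℝ → ℝ) :
    binomialMean c (fun y => a * f y) = a * binomialMean c f := by
  simp only [binomialMean, mul_sum]
  exact sum_congr rfl fun _ _ => by ring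

lemma binomialMean_mono {f g : ℝ → ℝ} (h : ∀ y ∈ Set.Icc (0 : ℝ) 1, f y ≤ g y) :
    binomialMean c f ≤ binomialMean c g := by
  refine sum_le_sum fun z hz =>
    mul_le_mul_of_nonneg_left (h _ ⟨by positivity, ?_⟩) (by positivity)
  exact div_le_one_of_le₀ (by exact_mod_cast mem_range_succ_iff.1 hz) (Nat.cast_nonneg c)

variable {c}

lemma binomialMean_centered_moment (hc : c ≠ 0) (k : ℕ) :
    binomialMean c (fun y => (y - 1 / 2) ^ k)
      = (∑ z ∈ range (c + 1), (c.choose z : ℝ) * (2 * z - c) ^ k)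
        / (2 ^ c * (2 * c) ^ k) := by
  rw [binomialMean, sum_div]
  refine sum_congr rfl fun z _ => ?_
  have : (c : ℝ) ≠ 0 := by exact_mod_cast hc
  rw [show (z : ℝ) / c - 1 / 2 = (2 * z - c) / (2 * c) by field_simp,
    div_pow, div_pow, one_pow]
  field_simp

lemma binomialMean_sq_sub_half (hc : c ≠ 0) :
    binomialMean c (fun y => (y - 1 / 2) ^ 2) = 1 / (4 * c) := by
  have : (c : ℝ) ≠ 0 := by exact_mod_cast hc
  rw [binomialMean_centered_moment hc, sum_range_choose_mul_centered_sq]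
  field_simp
  ring

lemma binomialMean_pow_four_sub_half (hc : c ≠ 0) :
    binomialMean c (fun y => (y - 1 / 2) ^ 4) = (3 * c - 2) / (16 * c ^ 3) := by
  have : (c : ℝ) ≠ 0 := by exact_mod_cast hc
  rw [binomialMean_centered_moment hc, sum_range_choose_mul_centered_pow_four]
  field_simp
  ring

end BinomialMean

lemma mul_binomialMean_one_sub_binEnt_sub {c : ℕ} (hc : c ≠ 0) :
    c * binomialMean c (fun y => 1 - binEnt y - 2 / log 2 * (y - 1 / 2) ^ 2)
      = c * (1 - binomialMean c binEnt) - 1 / (2 * log 2) := by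
  have : (c : ℝ) ≠ 0 := by exact_mod_cast hc
  have hlog : log 2 ≠ 0 := (log_pos one_lt_two).ne'
  rw [binomialMean_sub, binomialMean_sub, binomialMean_const, binomialMean_const_mul,
    binomialMean_sq_sub_half hc]
  field_simp
  ring

/-- For `B_c ~ Bin(c, 1/2)`, `lim_{c→∞} c (1 - E[h(B_c/c)]) = 1/(2 ln 2)`. -/
theorem stmt16 :
    Tendsto (fun c : ℕ => (c : ℝ) *
        (1 - ∑ z ∈ Finset.range (c+1), (c.choose z : ℝ) * (1/2)^c * binEnt ((z : ℝ)/(c : ℝ))))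
      atTop (nhds (1 / (2 * Real.log 2))) := by
  change Tendsto (fun c : ℕ => (c : ℝ) * (1 - binomialMean c binEnt)) atTop _
  rw [← tendsto_sub_nhds_zero_iff]
  refine squeeze_zero' ?_ ?_ (tendsto_const_div_atTop_nhds_zero_nat 2)
  all_goals filter_upwards [eventually_ne_atTop 0] with c hc
  all_goals rw [← mul_binomialMean_one_sub_binEnt_sub hc]
  · refine mul_nonneg c.cast_nonneg ?_
    simpa only [binomialMean_const] using
      binomialMean_mono c fun y hy => (one_sub_binEnt_sub_mem_Icc hy).1
  · have hc' : (0 : ℝ) < c := by positivity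
    calc _ ≤ c * binomialMean c (fun y => 8 * (y - 1 / 2) ^ 4) := by
          gcongr
          exact binomialMean_mono c fun y hy => (one_sub_binEnt_sub_mem_Icc hy).2
      _ = (3 * c - 2) / (2 * c ^ 2) := by
          rw [binomialMean_const_mul, binomialMean_pow_four_sub_half hc]
          field_simp
          ring
      _ ≤ 2 / c := by
          rw [div_le_div_iff₀ (by positivity) hc']
          nlinarith
end
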